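/- Suppose every item fits into the largest bin (max_i s_i ≤ b_max) and each item may be cut at most once. Then Next Fit with Cuts — which fills bins of capacity b_max consecutively, splitting the current item whenever it does not fully fit and placing the remainder into the next bin — uses exactly ⌈(Σ_i s_i)/b_max⌉ bins, which is optimal: no feasible packing uses fewer bins. -/

import Mathlib

open scoped BigOperators

/-- A feasible packing of item sizes `L` into `k` bins with capacities `caps`,
where each item may be split into at most `D + 1` positive fragments. -/
def FeasiblePacking (L : List ℝ) {k : ℕ} (caps : Fin k → ℝ) (D : ℕ) : Prop :=
  ∃ pieces : List (List (ℝ × Fin k)),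
    List.Forall₂ (fun (s : ℝ) (fr : List (ℝ × Fin k)) =>
      fr.length ≤ D + 1 ∧ (fr.map Prod.fst).sum = s ∧ ∀ p ∈ fr, 0 < p.1) L pieces ∧
    ∀ j : Fin k, ((pieces.flatten.filter (fun p => p.2 = j)).map Prod.fst).sum ≤ caps j

/-!
Next Fit with Cuts lays the items end to end along `[0, S]`, `S = Σ sᵢ`, and cuts this segment
at the multiples of `b`: bin `j` receives whatever lies in `[j b, (j + 1) b]`, so
`⌈S / b⌉` bins suffice, each holds at most `b`, and an item of size at most `b` meets at most
two bins, i.e. is cut at most once. Conversely any packing into `k` bins of capacity `b`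
has `S ≤ k b`.
-/

lemma List.sum_map_filter_eq_sum_map_ite {α : Type*} (l : List α) (p : α → Bool) (f : α → ℝ) :
    ((l.filter p).map f).sum = (l.map fun a => if p a then f a else 0).sum := by
  simp [List.sum_map_ite]

lemma List.sum_map_fst_eq_sum_filter_snd {k : ℕ} (l : List (ℝ × Fin k)) :
    (l.map Prod.fst).sum = ∑ j : Fin k, ((l.filter (·.2 = j)).map Prod.fst).sum := by
  induction l with
  | nil => simp
  | cons p l ih =>
    have h (j : Fin k) : (((p :: l).filter (·.2 = j)).map Prod.fst).sum
        = (if p.2 = j then p.1 else 0) + ((l.filter (·.2 = j)).map Prod.fst).sum := by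
      by_cases hj : p.2 = j <;> simp [hj]
    simp [h, Finset.sum_add_distrib, ih]

lemma List.sum_eq_sum_map_fst_flatten {ι : Type*} {L : List ℝ} {P : List (List (ℝ × ι))}
    (h : List.Forall₂ (fun s fr => (fr.map Prod.fst).sum = s) L P) :
    L.sum = (P.flatten.map Prod.fst).sum := by
  induction h with
  | nil => simp
  | cons h _ ih => simp [ih, h]

lemma List.length_le_two_of_nodup_of_le_succ {l : List ℕ} (hl : l.Nodup)
    (h : ∀ a ∈ l, ∀ b ∈ l, a ≤ b + 1) : l.length ≤ 2 := by
  match l, hl, h with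
  | [], _, _ | [_], _, _ | [_, _], _, _ => simp
  | a :: b :: c :: _, hl, h =>
    simp only [List.nodup_cons, List.mem_cons] at hl
    have := h a (by simp) c (by simp)
    have := h c (by simp) a (by simp)
    have := h a (by simp) b (by simp)
    have := h b (by simp) a (by simp)
    have := h b (by simp) c (by simp)
    have := h c (by simp) b (by simp)
    omega

theorem FeasiblePacking.sum_le_sum_caps {L : List ℝ} {k : ℕ} {caps : Fin k → ℝ} {D : ℕ}
    (h : FeasiblePacking L caps D) : L.sum ≤ ∑ j, caps j := by
  obtain ⟨pieces, hfr, hcaps⟩ := h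
  rw [List.sum_eq_sum_map_fst_flatten (hfr.imp fun _ _ h => h.2.1),
    List.sum_map_fst_eq_sum_filter_snd]
  exact Finset.sum_le_sum fun j _ => hcaps j

/-- The length of `[0, y] ∩ [j b, (j + 1) b]`. -/
def binFill (b : ℝ) (j : ℕ) (y : ℝ) : ℝ := max 0 (min b (y - j * b))

section binFill

variable {b : ℝ} {j : ℕ}

lemma binFill_nonneg (y : ℝ) : 0 ≤ binFill b j y := le_max_left _ _

lemma binFill_le (hb : 0 ≤ b) (y : ℝ) : binFill b j y ≤ b :=
  max_le hb (min_le_left _ _)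

lemma binFill_mono : Monotone (binFill b j) := fun _ _ h =>
  max_le_max le_rfl (min_le_min le_rfl (by linarith))

lemma sum_binFill (hb : 0 ≤ b) (k : ℕ) {y : ℝ} (hy : 0 ≤ y) :
    ∑ j ∈ Finset.range k, binFill b j y = min y (k * b) := by
  induction k with
  | zero => simp [hy]
  | succ k ih =>
    rw [Finset.sum_range_succ, ih, binFill]
    push_cast
    simp only [min_def, max_def]
    split_ifs <;> linarith

lemma lt_of_binFill_lt {x y : ℝ} (h : binFill b j x < binFill b j y) :
    j * b < y ∧ x < (j + 1) * b := by
  unfold binFill at h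
  simp only [min_def, max_def] at h
  constructor <;> by_contra! <;> split_ifs at h <;> linarith

end binFill

noncomputable def cutFragments (b : ℝ) (k : ℕ) (x s : ℝ) : List (ℝ × Fin k) :=
  ((List.finRange k).map fun j : Fin k => (binFill b j (x + s) - binFill b j x, j)).filter
    (0 < ·.1)

noncomputable def nextFitWithCuts (b : ℝ) (k : ℕ) : ℝ → List ℝ → List (List (ℝ × Fin k))
  | _, [] => []
  | x, s :: L => cutFragments b k x s :: nextFitWithCuts b k (x + s) L

section NextFitWithCuts

variable {b : ℝ} {k : ℕ}

lemma sum_cutFragments_filter {x s : ℝ} (hs : 0 ≤ s) (j : Fin k) :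
    (((cutFragments b k x s).filter (·.2 = j)).map Prod.fst).sum
      = binFill b j (x + s) - binFill b j x := by
  have hd : binFill b j x ≤ binFill b j (x + s) := binFill_mono (by linarith)
  simp only [cutFragments, List.filter_filter, List.filter_map, List.map_map]
  rw [List.sum_map_filter_eq_sum_map_ite, ← Fin.sum_univ_def]
  simpa [ite_and, eq_comm (b := j)] using
    fun h : binFill b j (x + s) ≤ binFill b j x => (sub_eq_zero.2 (le_antisymm h hd)).symm

lemma sum_cutFragments (hb : 0 ≤ b) {x s : ℝ} (hx : 0 ≤ x) (hs : 0 ≤ s) (hxs : x + s ≤ k * b) :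
    ((cutFragments b k x s).map Prod.fst).sum = s := by
  rw [List.sum_map_fst_eq_sum_filter_snd]
  simp only [sum_cutFragments_filter hs, Finset.sum_sub_distrib]
  rw [Fin.sum_univ_eq_sum_range (fun j => binFill b j (x + s)),
    Fin.sum_univ_eq_sum_range (fun j => binFill b j x), sum_binFill hb k (by linarith),
    sum_binFill hb k hx, min_eq_left hxs, min_eq_left (by linarith)]
  ring

lemma length_cutFragments_le (hb : 0 < b) {x s : ℝ} (hsb : s ≤ b) :
    (cutFragments b k x s).length ≤ 2 := by
  have hbins : ∀ p ∈ cutFragments b k x s, (p.2 : ℕ) * b < x + s ∧ x < (p.2 + 1 : ℕ) * b := by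
    intro p hp
    simp only [cutFragments, List.mem_filter, List.mem_map] at hp
    obtain ⟨⟨j, -, rfl⟩, hpos⟩ := hp
    exact_mod_cast lt_of_binFill_lt (sub_pos.1 (by simpa using hpos))
  rw [← List.length_map (f := fun p : ℝ × Fin k => (p.2 : ℕ))]
  refine List.length_le_two_of_nodup_of_le_succ ?_ ?_
  · refine (List.nodup_range (n := k)).sublist ?_
    unfold cutFragments
    refine (List.filter_sublist.map _).trans ?_
    simp [List.map_map, Function.comp_def]
  · simp only [List.mem_map]
    rintro _ ⟨p, hp, rfl⟩ _ ⟨q, hq, rfl⟩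
    have h1 := hbins p hp
    have h2 := hbins q hq
    have hlt : ((p.2 : ℕ) : ℝ) < (q.2 : ℕ) + 2 := by
      rw [← mul_lt_mul_iff_of_pos_right hb]; push_cast at h1 h2 ⊢; linarith
    exact_mod_cast Nat.le_of_lt_succ (by exact_mod_cast hlt)

lemma sum_nextFitWithCuts_filter {x : ℝ} {L : List ℝ} (hL : ∀ s ∈ L, 0 ≤ s) (j : Fin k) :
    ((((nextFitWithCuts b k x L).flatten).filter (·.2 = j)).map Prod.fst).sum
      = binFill b j (x + L.sum) - binFill b j x := by
  induction L generalizing x with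
  | nil => simp [nextFitWithCuts]
  | cons s L ih =>
    simp only [List.forall_mem_cons] at hL
    simp only [nextFitWithCuts, List.flatten_cons, List.filter_append, List.map_append,
      List.sum_append, sum_cutFragments_filter hL.1, ih hL.2, List.sum_cons, add_assoc]
    ring

lemma forall₂_nextFitWithCuts (hb : 0 < b) {x : ℝ} {L : List ℝ} (hx : 0 ≤ x)
    (hL : ∀ s ∈ L, 0 < s ∧ s ≤ b) (hk : x + L.sum ≤ k * b) :
    List.Forall₂ (fun (s : ℝ) (fr : List (ℝ × Fin k)) =>
      fr.length ≤ 1 + 1 ∧ (fr.map Prod.fst).sum = s ∧ ∀ p ∈ fr, 0 < p.1)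
      L (nextFitWithCuts b k x L) := by
  induction L generalizing x with
  | nil => exact List.Forall₂.nil
  | cons s L ih =>
    simp only [List.forall_mem_cons] at hL
    have hLsum : 0 ≤ L.sum := List.sum_nonneg fun t ht => (hL.2 t ht).1.le
    rw [List.sum_cons] at hk
    refine List.Forall₂.cons ⟨length_cutFragments_le hb hL.1.2,
      sum_cutFragments hb.le hx hL.1.1.le (by linarith), fun p hp => ?_⟩
      (ih (by linarith [hL.1.1]) hL.2 (by linarith))
    simpa using (List.mem_filter.1 hp).2

theorem feasiblePacking_of_sum_le (hb : 0 < b) {L : List ℝ} (hL : ∀ s ∈ L, 0 < s ∧ s ≤ b)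
    (hk : L.sum ≤ k * b) : FeasiblePacking L (fun _ : Fin k => b) 1 := by
  refine ⟨nextFitWithCuts b k 0 L, forall₂_nextFitWithCuts hb le_rfl hL (by simpa using hk),
    fun j => ?_⟩
  rw [sum_nextFitWithCuts_filter (fun s hs => (hL s hs).1.le), zero_add]
  linarith [binFill_le (j := j) hb.le L.sum, binFill_nonneg (b := b) (j := j) 0]

end NextFitWithCuts

/-- Next Fit with Cuts: if every item fits in the largest bin and each item may be cut
at most once, there is a packing into exactly `⌈S / bmax⌉` bins of capacity `bmax`,
and no feasible packing (with at most one cut per item) uses fewer bins. -/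
theorem stmt1 (L : List ℝ) (bmax : ℝ) (hb : 0 < bmax)
    (hL : ∀ s ∈ L, 0 < s ∧ s ≤ bmax) :
    FeasiblePacking L (fun _ : Fin (⌈L.sum / bmax⌉.toNat) => bmax) 1 ∧
    ∀ k : ℕ, FeasiblePacking L (fun _ : Fin k => bmax) 1 → ⌈L.sum / bmax⌉.toNat ≤ k := by
  have hS : 0 ≤ L.sum := List.sum_nonneg fun s hs => (hL s hs).1.le
  refine ⟨feasiblePacking_of_sum_le hb hL ?_, fun k hk => ?_⟩
  · rw [← div_le_iff₀ hb]
    calc L.sum / bmax ≤ ⌈L.sum / bmax⌉ := Int.le_ceil _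
      _ = (⌈L.sum / bmax⌉.toNat : ℤ) := by
        rw [Int.toNat_of_nonneg (Int.ceil_nonneg (div_nonneg hS hb.le))]
      _ = (⌈L.sum / bmax⌉.toNat : ℝ) := by push_cast; rfl
  · have hcap := hk.sum_le_sum_caps
    simp only [Finset.sum_const, Finset.card_univ, Fintype.card_fin, nsmul_eq_mul] at hcap
    exact Int.toNat_le.2 (Int.ceil_le.2 (by rw [div_le_iff₀ hb]; exact_mod_cast hcap))
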